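/- arXiv:2512.01213 — 3 statements merged into one kernel-verified Lean document; each statement's English description precedes it below -/
import Mathlib

section
/- Let x_1, …, x_n be real numbers and 1 ≤ k ≤ n. Then the average of the k largest values equals min over s ∈ ℝ of (s + (1/k)·Σ_{i=1}^n max(x_i − s, 0)). Moreover, the function (x_1,…,x_n) ↦ Σ_{i=1}^k x_{[i]} (sum of the top-k elements) is convex. -/
noncomputable def topkSum (n k : ℕ) (x : Fin n → ℝ) : ℝ :=
  sSup ((fun s : Finset (Fin n) => ∑ i ∈ s, x i) '' {s | s.card = k})

lemma topk_finite (n k : ℕ) (x : Fin n → ℝ) :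
    ((fun s : Finset (Fin n) => ∑ i ∈ s, x i) '' {s | s.card = k}).Finite :=
  (Set.toFinite _).image _

lemma topk_nonempty (n k : ℕ) (hkn : k ≤ n) (x : Fin n → ℝ) :
    ((fun s : Finset (Fin n) => ∑ i ∈ s, x i) '' {s | s.card = k}).Nonempty := by
  obtain ⟨S, -, hS⟩ := (Finset.univ : Finset (Fin n)).exists_subset_card_eq (n := k)
    (by simpa using hkn)
  exact ⟨_, ⟨S, hS, rfl⟩⟩

lemma topk_le (n k : ℕ) (x : Fin n → ℝ) (A : Finset (Fin n)) (hA : A.card = k) :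
    ∑ i ∈ A, x i ≤ topkSum n k x :=
  le_csSup (topk_finite n k x).bddAbove ⟨A, hA, rfl⟩

lemma topk_exists (n k : ℕ) (hkn : k ≤ n) (x : Fin n → ℝ) :
    ∃ S : Finset (Fin n), S.card = k ∧ ∑ i ∈ S, x i = topkSum n k x := by
  have h := (topk_nonempty n k hkn x).csSup_mem (topk_finite n k x)
  obtain ⟨S, hS, hv⟩ := h
  exact ⟨S, hS, hv⟩

/-- The average of the k largest values equals the attained minimum over s of
    s + (1/k)·Σ max(xᵢ − s, 0); moreover the top-k sum is convex. -/
theorem stmt_4 (n k : ℕ) (hk : 1 ≤ k) (hkn : k ≤ n) (x : Fin n → ℝ) :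
    IsLeast {v : ℝ | ∃ s : ℝ, v = s + (1 / (k : ℝ)) * ∑ i, max (x i - s) 0}
      ((1 / (k : ℝ)) * topkSum n k x) ∧
    ConvexOn ℝ Set.univ (topkSum n k) := by
  have hk0 : (k : ℝ) ≠ 0 := Nat.cast_ne_zero.mpr (by omega)
  obtain ⟨S, hScard, hSval⟩ := topk_exists n k hkn x
  have hSne : S.Nonempty := Finset.card_pos.mp (by omega)
  constructor
  · constructor
    · -- membership: take s = min of x over S
      obtain ⟨i0, hi0S, hi0min⟩ := S.exists_min_image x hSne
      set t := x i0 with ht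
      have hout : ∀ j, j ∉ S → x j ≤ t := by
        intro j hj
        by_contra hlt
        push_neg at hlt
        have hj' : j ∉ S.erase i0 := fun h => hj (Finset.mem_of_mem_erase h)
        have hcard : (insert j (S.erase i0)).card = k := by
          rw [Finset.card_insert_of_notMem hj', Finset.card_erase_of_mem hi0S]
          omega
        have hle := topk_le n k x _ hcard
        rw [Finset.sum_insert hj'] at hle
        have herase : ∑ i ∈ S.erase i0, x i = ∑ i ∈ S, x i - x i0 := by
          rw [Finset.sum_erase_eq_sub hi0S]
        rw [herase, ← hSval] at hle
        linarith
      have hsum : ∑ i, max (x i - t) 0 = ∑ i ∈ S, x i - k * t := by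
        have hsplit : ∑ i, max (x i - t) 0 = ∑ i ∈ S, max (x i - t) 0 := by
          refine (Finset.sum_subset (Finset.subset_univ S) ?_).symm
          intro j _ hj
          simpa [max_eq_right] using sub_nonpos.mpr (hout j hj)
        rw [hsplit]
        have : ∀ i ∈ S, max (x i - t) 0 = x i - t := fun i hi =>
          max_eq_left (sub_nonneg.mpr (hi0min i hi))
        rw [Finset.sum_congr rfl this, Finset.sum_sub_distrib, Finset.sum_const, hScard]
        push_cast
        ring
      refine ⟨t, ?_⟩
      rw [hsum, ← hSval]
      field_simp
      ring
    · -- lower bound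
      rintro v ⟨s, rfl⟩
      have h1 : ∑ i ∈ S, x i ≤ k * s + ∑ i, max (x i - s) 0 := by
        have h2 : ∑ i ∈ S, x i ≤ ∑ i ∈ S, (s + max (x i - s) 0) := by
          refine Finset.sum_le_sum fun i _ => ?_
          have := le_max_left (x i - s) 0
          linarith
        have h3 : ∑ i ∈ S, (s + max (x i - s) 0) = k * s + ∑ i ∈ S, max (x i - s) 0 := by
          rw [Finset.sum_add_distrib, Finset.sum_const, hScard]; push_cast; ring
        have h4 : ∑ i ∈ S, max (x i - s) 0 ≤ ∑ i, max (x i - s) 0 :=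
          Finset.sum_le_sum_of_subset_of_nonneg (Finset.subset_univ S)
            (fun i _ _ => le_max_right _ _)
        linarith
      rw [← hSval]
      have hkpos : (0 : ℝ) < k := by positivity
      rw [div_mul_eq_mul_div, div_mul_eq_mul_div, one_mul, one_mul, div_le_iff₀ hkpos]
      calc ∑ i ∈ S, x i ≤ k * s + ∑ i, max (x i - s) 0 := h1
        _ = (s + (∑ i, max (x i - s) 0) / k) * k := by field_simp
  · refine ⟨convex_univ, fun p _ q _ a b ha hb hab => ?_⟩
    have hne := topk_nonempty n k hkn (a • p + b • q)
    refine csSup_le hne ?_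
    rintro v ⟨A, hA, rfl⟩
    simp only [Set.mem_setOf_eq] at hA
    have : ∑ i ∈ A, (a • p + b • q) i = a * ∑ i ∈ A, p i + b * ∑ i ∈ A, q i := by
      simp [Finset.mul_sum, Finset.sum_add_distrib, smul_eq_mul]
    simp only []
    rw [this]
    have h1 := topk_le n k p A hA
    have h2 := topk_le n k q A hA
    simp only [smul_eq_mul]
    exact add_le_add (mul_le_mul_of_nonneg_left h1 ha) (mul_le_mul_of_nonneg_left h2 hb)
end

section
/- Fix E_b : [0,1] → ℝ of the form E_b(b) = E[(Y−b)²] (conditional second-moment expansion) for a random variable Y with values in [0,1], and let ΔE ∈ ℝ with ΔE = E[Y] − μ for some μ ∈ [0,1]. Define F₀(b, γ) = E[(Y−b)²] + 2γ·ΔE − γ². Then min over b ∈ [0,1] max over γ ∈ [b−1, 1] of F₀(b,γ) = Var(Y) + (ΔE)², i.e., restricting γ to [b−1,1] instead of [−1,1] does not change the minimax value, and the optimum is attained at b* = E[Y]. -/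
open MeasureTheory

lemma quad_sup (C Δ b : ℝ) (hb1 : b - 1 ≤ 1) (hΔ : Δ ≤ 1) :
    IsGreatest ((fun γ : ℝ => C + 2*γ*Δ - γ^2) '' Set.Icc (b-1) 1)
      (C + 2*(max (b-1) Δ)*Δ - (max (b-1) Δ)^2) := by
  constructor
  · exact ⟨max (b-1) Δ, ⟨le_max_left _ _, max_le hb1 hΔ⟩, rfl⟩
  · rintro x ⟨γ, ⟨hγ1, hγ2⟩, rfl⟩
    simp only
    rcases le_or_gt Δ (b-1) with h | h
    · rw [max_eq_left h]
      nlinarith [mul_nonneg (sub_nonneg.2 hγ1) (by linarith : (0:ℝ) ≤ γ + (b-1) - 2*Δ)]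
    · rw [max_eq_right h.le]
      nlinarith [sq_nonneg (γ - Δ)]

/-- Constrained minimax for the negative-side variable: with ΔE = E[Y] − μ,
    min_{b ∈ [0,1]} max_{γ ∈ [b−1,1]} (E[(Y−b)²] + 2γΔE − γ²) = Var(Y) + ΔE²,
    with the outer minimum attained at b* = E[Y]. -/
theorem stmt_12 {Ω : Type*} [MeasurableSpace Ω] (P : Measure Ω) [IsProbabilityMeasure P]
    (Y : Ω → ℝ) (hYm : Measurable Y) (hY : ∀ ω, Y ω ∈ Set.Icc (0:ℝ) 1)
    (μ : ℝ) (hμ : μ ∈ Set.Icc (0:ℝ) 1) :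
    IsLeast ((fun b : ℝ =>
        sSup ((fun γ : ℝ =>
          (∫ ω, (Y ω - b)^2 ∂P) + 2*γ*((∫ ω, Y ω ∂P) - μ) - γ^2) '' Set.Icc (b-1) 1))
      '' Set.Icc (0:ℝ) 1)
      (ProbabilityTheory.variance Y P + ((∫ ω, Y ω ∂P) - μ)^2) ∧
    sSup ((fun γ : ℝ =>
        (∫ ω, (Y ω - (∫ ω', Y ω' ∂P))^2 ∂P) + 2*γ*((∫ ω, Y ω ∂P) - μ) - γ^2)
      '' Set.Icc ((∫ ω, Y ω ∂P) - 1) 1)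
      = ProbabilityTheory.variance Y P + ((∫ ω, Y ω ∂P) - μ)^2 := by
  set m : ℝ := ∫ ω, Y ω ∂P with hm
  set Δ : ℝ := m - μ with hΔdef
  -- basic integrability
  have hYi : Integrable Y P := by
    refine ⟨hYm.aestronglyMeasurable, ?_⟩
    refine HasFiniteIntegral.of_bounded (C := 1) (ae_of_all _ fun ω => ?_)
    have := hY ω
    rw [Real.norm_eq_abs, abs_le]; constructor <;> linarith [this.1, this.2]
  have hint : ∀ b : ℝ, Integrable (fun ω => (Y ω - b)^2) P := by
    intro b
    refine ⟨((hYm.sub measurable_const).pow_const 2).aestronglyMeasurable, ?_⟩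
    refine HasFiniteIntegral.of_bounded (C := (1 + |b|)^2) (ae_of_all _ fun ω => ?_)
    have h1 := (hY ω).1; have h2 := (hY ω).2
    have hb1 : -|b| ≤ b := neg_abs_le b
    have hb2 : b ≤ |b| := le_abs_self b
    rw [Real.norm_eq_abs, abs_of_nonneg (sq_nonneg _)]
    nlinarith
  have hm0 : 0 ≤ m := integral_nonneg fun ω => (hY ω).1
  have hm1 : m ≤ 1 := by
    have : m ≤ ∫ _, (1:ℝ) ∂P := integral_mono hYi (integrable_const 1) fun ω => (hY ω).2
    simpa using this
  have hΔ1 : Δ ≤ 1 := by rw [hΔdef]; linarith [hμ.1]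
  -- variance equals the centered second moment
  have hmem : MemLp Y 2 P :=
    MemLp.of_bound hYm.aestronglyMeasurable 1 (ae_of_all _ fun ω => by
      have := hY ω
      rw [Real.norm_eq_abs, abs_le]; constructor <;> linarith [this.1, this.2])
  have hVar : ProbabilityTheory.variance Y P = ∫ ω, (Y ω - m)^2 ∂P := by
    rw [ProbabilityTheory.variance_eq_integral hYm.aemeasurable]
  -- second-moment decomposition
  have key : ∀ b : ℝ, (∫ ω, (Y ω - b)^2 ∂P) = (∫ ω, (Y ω - m)^2 ∂P) + (m - b)^2 := by
    intro b
    have h1 : Integrable (fun ω => (Y ω - m)^2) P := hint m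
    have h2 : Integrable (fun ω => (2*(m-b))*(Y ω - m)) P :=
      ((hYi.sub (integrable_const m)).const_mul _)
    have heq : (fun ω => (Y ω - b)^2)
        = fun ω => (Y ω - m)^2 + ((2*(m-b))*(Y ω - m) + (m-b)^2) := by
      funext ω; ring
    have h3 : Integrable (fun ω => (2*(m-b))*(Y ω - m) + (m-b)^2) P :=
      h2.add (integrable_const _)
    rw [heq, integral_add h1 h3,
      integral_add h2 (integrable_const _), integral_const_mul,
      integral_sub hYi (integrable_const m), integral_const]
    simp [← hm]
  -- the inner sup in closed form
  have hsup : ∀ b : ℝ, b ≤ 2 →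
      sSup ((fun γ : ℝ => (∫ ω, (Y ω - b)^2 ∂P) + 2*γ*Δ - γ^2) '' Set.Icc (b-1) 1)
        = (∫ ω, (Y ω - b)^2 ∂P) + 2*(max (b-1) Δ)*Δ - (max (b-1) Δ)^2 := by
    intro b hb
    exact (quad_sup _ Δ b (by linarith) hΔ1).csSup_eq
  -- part 2 : value at b = m
  have hpart2 :
      sSup ((fun γ : ℝ =>
        (∫ ω, (Y ω - (∫ ω', Y ω' ∂P))^2 ∂P) + 2*γ*((∫ ω, Y ω ∂P) - μ) - γ^2)
      '' Set.Icc ((∫ ω, Y ω ∂P) - 1) 1)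
      = ProbabilityTheory.variance Y P + ((∫ ω, Y ω ∂P) - μ)^2 := by
    have h := hsup m (by linarith)
    rw [max_eq_right (by rw [hΔdef]; linarith [hμ.2])] at h
    rw [← hm, ← hΔdef, h, hVar]; ring
  refine ⟨⟨⟨m, ⟨hm0, hm1⟩, ?_⟩, ?_⟩, hpart2⟩
  · exact hpart2
  · rintro x ⟨b, ⟨hb0, hb1⟩, rfl⟩
    simp only
    rw [hsup b (by linarith), key b, hVar]
    rcases le_or_gt Δ (b-1) with h | h
    · rw [max_eq_left h]
      have hμ2 := hμ.2
      have h1 : (0:ℝ) ≤ 1 - μ := by linarith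
      have h2 : 1 - μ ≤ b - m := by rw [hΔdef] at h; linarith
      nlinarith
    · rw [max_eq_right h.le]
      nlinarith [sq_nonneg (m - b)]
end

section
/- Let Y be a [0,1]-valued random variable, b ∈ [0,1], γ ∈ [b−1,1], β ∈ (0,1], and η be the β-quantile of Y (i.e., P[Y ≥ η] = β). Define L(y) = (y−b)² + 2(1+γ)y. Then E[1{Y ≥ η}·L(Y)] = min over s ∈ ℝ of E[β·s + max(L(Y) − s, 0)]. -/
open MeasureTheory

/-- General CVaR representation: if `g` is bounded measurable, `(P A).toReal = β`,
and for some `s₀` the positive part `max (g - s₀) 0` coincides pointwise with the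
indicator of `A` applied to `g - s₀`, then `∫_A g` is the attained minimum of
`s ↦ ∫ (β s + max (g - s) 0)`. -/
lemma cvar_isLeast {Ω : Type*} [MeasurableSpace Ω] (P : Measure Ω) [IsProbabilityMeasure P]
    (g : Ω → ℝ) (hg : Measurable g) (C : ℝ) (hbd : ∀ ω, |g ω| ≤ C)
    (A : Set Ω) (hA : MeasurableSet A) (β s₀ : ℝ)
    (hPA : (P A).toReal = β)
    (hkey : ∀ ω, max (g ω - s₀) 0 = Set.indicator A (fun ω => g ω - s₀) ω) :
    IsLeast {v : ℝ | ∃ s : ℝ, v = ∫ ω, (β*s + max (g ω - s) 0) ∂P}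
      (∫ ω in A, g ω ∂P) := by
  have hInt : Integrable g P := by
    refine (integrable_const C).mono' hg.aestronglyMeasurable ?_
    exact ae_of_all _ fun ω => by simpa using hbd ω
  have hIntMax : ∀ s : ℝ, Integrable (fun ω => max (g ω - s) 0) P := by
    intro s
    refine (integrable_const (C + |s|)).mono'
      ((hg.sub_const s).max measurable_const).aestronglyMeasurable ?_
    refine ae_of_all _ fun ω => ?_
    rw [Real.norm_eq_abs, abs_of_nonneg (le_max_right _ _)]
    have h1 := (abs_le.mp (hbd ω)).2
    have h2 := neg_abs_le s
    have h3 : (0:ℝ) ≤ C + |s| := by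
      have hC := le_trans (abs_nonneg (g ω)) (hbd ω)
      have := abs_nonneg s
      linarith
    exact max_le (by linarith) h3
  constructor
  · refine ⟨s₀, ?_⟩
    rw [integral_add (integrable_const _) (hIntMax s₀), integral_const]
    simp only [measureReal_def, measure_univ, ENNReal.toReal_one, one_smul]
    have h : ∫ ω, max (g ω - s₀) 0 ∂P = ∫ ω in A, (g ω - s₀) ∂P := by
      rw [show (fun ω => max (g ω - s₀) 0) = Set.indicator A (fun ω => g ω - s₀) from
        funext hkey, integral_indicator hA]
    rw [h, integral_sub hInt.integrableOn (integrable_const _), setIntegral_const, measureReal_def, hPA,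
      smul_eq_mul]
    ring
  · rintro v ⟨s, rfl⟩
    rw [integral_add (integrable_const _) (hIntMax s), integral_const]
    simp only [measureReal_def, measure_univ, ENNReal.toReal_one, one_smul]
    have h1 : ∫ ω in A, g ω ∂P - β * s = ∫ ω in A, (g ω - s) ∂P := by
      rw [integral_sub hInt.integrableOn (integrable_const _), setIntegral_const, measureReal_def, hPA,
        smul_eq_mul]
    have h2 : ∫ ω in A, (g ω - s) ∂P ≤ ∫ ω in A, max (g ω - s) 0 ∂P := by
      refine integral_mono (hInt.integrableOn.sub (integrable_const _).integrableOn)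
        (hIntMax s).integrableOn ?_
      intro ω; exact le_max_left _ _
    have h3 : ∫ ω in A, max (g ω - s) 0 ∂P ≤ ∫ ω, max (g ω - s) 0 ∂P :=
      setIntegral_le_integral (hIntMax s) (ae_of_all _ fun ω => le_max_right _ _)
    linarith

/-- Sorting-free threshold formulation of negative sample selection:
    with L(y) = (y−b)² + 2(1+γ)y nondecreasing (γ ∈ [b−1,1]) and P[Y ≥ η] = β,
    E[1{Y ≥ η}·L(Y)] is the attained minimum over s of E[βs + max(L(Y) − s, 0)]. -/
theorem stmt_15 {Ω : Type*} [MeasurableSpace Ω] (P : Measure Ω) [IsProbabilityMeasure P]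
    (Y : Ω → ℝ) (hYm : Measurable Y) (hY : ∀ ω, Y ω ∈ Set.Icc (0:ℝ) 1)
    (b γ β η : ℝ) (hb : b ∈ Set.Icc (0:ℝ) 1) (hγ : γ ∈ Set.Icc (b-1) 1)
    (hβ : 0 < β) (hβ1 : β ≤ 1)
    (hquant : (P {ω | η ≤ Y ω}).toReal = β) :
    IsLeast {v : ℝ | ∃ s : ℝ,
        v = ∫ ω, (β*s + max ((Y ω - b)^2 + 2*(1+γ)*(Y ω) - s) 0) ∂P}
      (∫ ω in {ω | η ≤ Y ω}, ((Y ω - b)^2 + 2*(1+γ)*(Y ω)) ∂P) := by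
  obtain ⟨hb0, hb1⟩ := hb
  obtain ⟨hγ1, hγ2⟩ := hγ
  have hAmeas : MeasurableSet {ω | η ≤ Y ω} := hYm measurableSet_Ici
  set η' : ℝ := max η 0 with hη'def
  have hη'0 : 0 ≤ η' := le_max_right _ _
  have hAeq : ∀ ω, ω ∈ {ω | η ≤ Y ω} ↔ η' ≤ Y ω := by
    intro ω
    simp only [Set.mem_setOf_eq, hη'def, max_le_iff]
    exact ⟨fun h => ⟨h, (hY ω).1⟩, fun h => h.1⟩
  -- the key pointwise identity with s₀ = L η'
  have hkey : ∀ ω, max (((Y ω - b)^2 + 2*(1+γ)*(Y ω)) - ((η' - b)^2 + 2*(1+γ)*η')) 0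
      = Set.indicator {ω | η ≤ Y ω}
          (fun ω => ((Y ω - b)^2 + 2*(1+γ)*(Y ω)) - ((η' - b)^2 + 2*(1+γ)*η')) ω := by
    intro ω
    by_cases hω : ω ∈ {ω | η ≤ Y ω}
    · rw [Set.indicator_of_mem hω]
      have h := (hAeq ω).mp hω
      exact max_eq_left (by nlinarith [hη'0, (hY ω).1])
    · rw [Set.indicator_of_notMem hω]
      have h : Y ω < η' := lt_of_not_ge (fun h => hω ((hAeq ω).mpr h))
      have h0 := (hY ω).1
      exact max_eq_right (by nlinarith)
  refine cvar_isLeast P (fun ω => (Y ω - b)^2 + 2*(1+γ)*(Y ω)) ?_ 5 ?_ _ hAmeas β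
    ((η' - b)^2 + 2*(1+γ)*η') hquant hkey
  · fun_prop
  · intro ω
    obtain ⟨h0, h1⟩ := hY ω
    rw [abs_le]
    constructor <;> (beta_reduce; nlinarith)
end
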